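/- Let ω² = (3+√2)/2, c = (7+2√2)/2, ω = √(ω²), and let B₄ = B(ω,c,c) be the 4×4 real matrix with rows (0,0,1,0), (0,0,0,1), (c,0,0,2ω), (0,c,−2ω,0). Then the characteristic polynomial of B₄ equals X⁴ − X² + (57/4 + 7√2), its four complex eigenvalues are ±√(1/2 ± i√(14 + 7√2)), every eigenvalue has nonzero real part, and at least one eigenvalue has strictly positive real part. Consequently the relative equilibrium of four equal masses at the square central configuration under the Manev potential is spectrally unstable. -/

import Mathlib

open Polynomial

/-- The linearization matrix of the planar system `ẍ = 2ωJẋ + diag(c₁,c₂)x`. -/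
def B (ω c₁ c₂ : ℝ) : Matrix (Fin 4) (Fin 4) ℝ :=
  !![0, 0, 1, 0;
     0, 0, 0, 1;
     c₁, 0, 0, 2*ω;
     0, c₂, -(2*ω), 0]

/-- `ω = √((3+√2)/2)`, the angular speed of the square relative equilibrium under the
Manev potential. -/
noncomputable def ωmsq : ℝ := Real.sqrt ((3 + Real.sqrt 2) / 2)

/-- `c = ω² + λ₆ = (7+2√2)/2`, the entry of the block `B₄ = B(ω,c,c)`. -/
noncomputable def cmsq : ℝ := (7 + 2 * Real.sqrt 2) / 2

/-- `μ₊ = √(1/2 + i√(14+7√2))`, one of the eigenvalues of `B₄`. -/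
noncomputable def μmsqP : ℂ :=
  ((1/2 : ℂ) + (Real.sqrt (14 + 7 * Real.sqrt 2) : ℂ) * Complex.I) ^ (1/2 : ℂ)

/-- `μ₋ = √(1/2 − i√(14+7√2))`, one of the eigenvalues of `B₄`. -/
noncomputable def μmsqM : ℂ :=
  ((1/2 : ℂ) - (Real.sqrt (14 + 7 * Real.sqrt 2) : ℂ) * Complex.I) ^ (1/2 : ℂ)

/-!
The block `B(ω,c,c)` has characteristic polynomial `X⁴ + (4ω² − 2c)X² + c²`, which at the Manev
values is `X⁴ − X² + (57/4 + 7√2)`. As a quadratic in `X²` its roots are `1/2 ± i√(14+7√2)`,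
so the eigenvalues are `±μ₊, ±μ₋` with `μ±` the principal square roots. Both radicands have
real part `1/2 > 0`, so `μ±` lie in the open right half-plane and `−μ±` in the left one.
-/

open Complex

theorem charpoly_B_self (ω c : ℝ) :
    (B ω c c).charpoly = X ^ 4 + C (4 * ω ^ 2 - 2 * c) * X ^ 2 + C (c ^ 2) := by
  rw [B, Matrix.charpoly]
  simp [Matrix.charmatrix, Matrix.det_succ_row_zero, Fin.sum_univ_succ]
  simp [Fin.succAbove, Matrix.diagonal, Fin.ext_iff, map_ofNat C]
  ring

theorem X_sub_C_mul_X_add_C_mul_X_sub_C_mul_X_add_C {R : Type*} [CommRing R] (a b : R) :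
    (X - C a) * (X + C a) * (X - C b) * (X + C b) =
      X ^ 4 - C (a ^ 2 + b ^ 2) * X ^ 2 + C (a ^ 2 * b ^ 2) := by
  simp only [C_add, C_mul, C_pow]
  ring

theorem re_ne_zero_of_isRoot_X_sub_C_mul_X_add_C_mul_X_sub_C_mul_X_add_C {a b μ : ℂ}
    (ha : a.re ≠ 0) (hb : b.re ≠ 0)
    (hμ : ((X - C a) * (X + C a) * (X - C b) * (X + C b)).IsRoot μ) : μ.re ≠ 0 := by
  simp only [IsRoot, eval_mul, eval_sub, eval_add, eval_X, eval_C, mul_eq_zero,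
    sub_eq_zero, add_eq_zero_iff_eq_neg] at hμ
  rcases hμ with ((rfl | rfl) | rfl) | rfl <;>
    simpa only [neg_re, neg_ne_zero]

theorem re_cpow_half_pos {z : ℂ} (hz : z ∈ slitPlane) : 0 < (z ^ (1 / 2 : ℂ)).re := by
  obtain ⟨harg, hz0⟩ := mem_slitPlane_iff_arg.1 hz
  have harg_lt : z.arg < Real.pi := lt_of_le_of_ne (arg_le_pi z) harg
  rw [cpow_def_of_ne_zero hz0, exp_re]
  refine mul_pos (Real.exp_pos _) (Real.cos_pos_of_mem_Ioo ?_)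
  have him : (log z * (1 / 2)).im = z.arg / 2 := by
    simp [mul_im, log_im, div_eq_mul_inv]
  rw [him]
  constructor <;> linarith [neg_pi_lt_arg z]

theorem ωmsq_sq : ωmsq ^ 2 = (3 + √2) / 2 := Real.sq_sqrt (by positivity)

theorem charpoly_B_msq :
    (B ωmsq cmsq cmsq).charpoly = X ^ 4 - X ^ 2 + C (57 / 4 + 7 * √2) := by
  have hlin : 4 * ωmsq ^ 2 - 2 * cmsq = -1 := by rw [ωmsq_sq, cmsq]; ring
  have hconst : cmsq ^ 2 = 57 / 4 + 7 * √2 := by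
    rw [cmsq]; linear_combination Real.sq_sqrt (zero_le_two : (0 : ℝ) ≤ 2)
  rw [charpoly_B_self, hlin, hconst, map_neg, map_one]
  ring

theorem μmsqP_sq : μmsqP ^ 2 = 1 / 2 + (√(14 + 7 * √2) : ℂ) * I := by
  rw [μmsqP, one_div 2]
  exact cpow_ofNat_inv_pow _ 2

theorem μmsqM_sq : μmsqM ^ 2 = 1 / 2 - (√(14 + 7 * √2) : ℂ) * I := by
  rw [μmsqM, one_div 2]
  exact cpow_ofNat_inv_pow _ 2

theorem μmsqP_sq_add_μmsqM_sq : μmsqP ^ 2 + μmsqM ^ 2 = 1 := by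
  rw [μmsqP_sq, μmsqM_sq]; ring

theorem μmsqP_sq_mul_μmsqM_sq : μmsqP ^ 2 * μmsqM ^ 2 = ((57 / 4 + 7 * √2 : ℝ) : ℂ) := by
  have hs : ((√(14 + 7 * √2) : ℝ) : ℂ) ^ 2 = 14 + 7 * (√2 : ℂ) := by
    rw [← ofReal_pow, Real.sq_sqrt (by positivity)]; push_cast; ring
  rw [μmsqP_sq, μmsqM_sq]
  push_cast
  linear_combination hs - ((√(14 + 7 * √2) : ℝ) : ℂ) ^ 2 * I_sq

theorem charpoly_map_B_msq :
    ((B ωmsq cmsq cmsq).map ofReal).charpoly =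
      (X - C μmsqP) * (X + C μmsqP) * (X - C μmsqM) * (X + C μmsqM) := by
  rw [X_sub_C_mul_X_add_C_mul_X_sub_C_mul_X_add_C, μmsqP_sq_add_μmsqM_sq, μmsqP_sq_mul_μmsqM_sq,
    map_one, one_mul]
  change ((B ωmsq cmsq cmsq).map ofRealHom).charpoly = _
  rw [Matrix.charpoly_map, charpoly_B_msq]
  simp [Polynomial.map_pow]

theorem re_μmsqP_pos : 0 < μmsqP.re :=
  re_cpow_half_pos (mem_slitPlane_iff.2 (Or.inl (by simp)))

theorem re_μmsqM_pos : 0 < μmsqM.re :=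
  re_cpow_half_pos (mem_slitPlane_iff.2 (Or.inl (by simp)))

/-- The block of the linearization at the square relative equilibrium under the Manev
potential corresponding to the double Hessian eigenvalue `2 + 1/√2` is spectrally
unstable. -/
theorem B₄_square_manev_unstable :
    (B ωmsq cmsq cmsq).charpoly =
      X ^ 4 - X ^ 2 + C (57/4 + 7 * Real.sqrt 2) ∧
    ((B ωmsq cmsq cmsq).map (Complex.ofReal)).charpoly =
      (X - C μmsqP) * (X + C μmsqP) * (X - C μmsqM) * (X + C μmsqM) ∧
    (∀ μ : ℂ,
      (((B ωmsq cmsq cmsq).map (Complex.ofReal)).charpoly).IsRoot μ → μ.re ≠ 0) ∧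
    (∃ μ : ℂ,
      (((B ωmsq cmsq cmsq).map (Complex.ofReal)).charpoly).IsRoot μ ∧ 0 < μ.re) := by
  rw [charpoly_map_B_msq]
  refine ⟨charpoly_B_msq, rfl, fun μ hμ => ?_, μmsqP, by simp [IsRoot], re_μmsqP_pos⟩
  exact re_ne_zero_of_isRoot_X_sub_C_mul_X_add_C_mul_X_sub_C_mul_X_add_C re_μmsqP_pos.ne'
    re_μmsqM_pos.ne' hμ
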